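/- For a monoid S the following are equivalent: (i) every coproduct of injective right S-acts is injective; (ii) there exist injective right S-acts A and B such that the coproduct A ⊔ B is weakly injective; (iii) there exists a decomposable weakly injective right S-act; (iv) S is left reversible; (v) every subact of every indecomposable right S-act is indecomposable; (vi) every subact of every indecomposable injective right S-act is indecomposable; (vii) every indecomposable injective right S-act contains exactly one zero element. -/

import Mathlib

/-!
Components of an act are the classes of the equivalence generated by `x ~ x ⊛ s`. Left
reversibility gives connected elements a common descendant `x ⊛ s = y ⊛ t`.
This forces subacts of indecomposable acts to be indecomposable, and it makes a homomorphism
from a subact into a coproduct send each component into a single summand; extending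
summand-wise then works because every injective act has a zero, which absorbs what lies
outside its summand.

Conversely, if `aS ∩ bS = ∅`, a weakly injective act can match `q₁ ⊛ a` and `q₂ ⊛ b` by a
single element for arbitrary `q₁, q₂`, so it is indecomposable. In the cofree (hence injective)
act `S → Prop` the indicator of `aS` connects the two constant functions, so their component is
an indecomposable injective act with two zeros.
-/

universe u

/-- A right `S`-act structure on a nonempty type `A`: a right action of the monoid `S`. -/
class RightAct (S : Type u) [Monoid S] (A : Type u) : Type u where
  act : A → S → A
  act_one : ∀ a : A, act a 1 = a
  act_mul : ∀ (a : A) (s t : S), act (act a s) t = act a (s * t)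
  nonempty : Nonempty A

infixl:70 " ⊛ " => RightAct.act

/-- `S` is left reversible: every two right ideals (equiv. principal ones) intersect. -/
def LeftReversible (S : Type u) [Monoid S] : Prop :=
  ∀ a b : S, ∃ u v : S, a * u = b * v

/-- A left zero element of the monoid `S`. -/
def IsLeftZero (S : Type u) [Monoid S] (z : S) : Prop :=
  ∀ s : S, z * s = z

/-- `f : A → B` is a homomorphism of right `S`-acts. -/
def IsActHom (S : Type u) [Monoid S] {A B : Type u} [RightAct S A] [RightAct S B]
    (f : A → B) : Prop :=
  ∀ (a : A) (s : S), f (a ⊛ s) = f a ⊛ s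

/-- The restriction of `f : A → B` to the subset `C` is a homomorphism of right `S`-acts. -/
def IsActHomOn (S : Type u) [Monoid S] {A B : Type u} [RightAct S A] [RightAct S B]
    (f : A → B) (C : Set A) : Prop :=
  ∀ a ∈ C, ∀ s : S, f (a ⊛ s) = f a ⊛ s

/-- A subact: a nonempty subset closed under the action. -/
def IsSubact (S : Type u) [Monoid S] {A : Type u} [RightAct S A] (C : Set A) : Prop :=
  C.Nonempty ∧ ∀ a ∈ C, ∀ s : S, a ⊛ s ∈ C

/-- A zero element of an act: fixed by the action of every `s ∈ S`. -/
def IsZeroElem (S : Type u) [Monoid S] {A : Type u} [RightAct S A] (θ : A) : Prop :=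
  ∀ s : S, θ ⊛ s = θ

/-- A subset `D` (viewed as an act) is decomposable: it is the disjoint union of two
nonempty subacts. -/
def DecomposableSet (S : Type u) [Monoid S] {A : Type u} [RightAct S A] (D : Set A) : Prop :=
  ∃ B C : Set A, IsSubact S B ∧ IsSubact S C ∧ B ∪ C = D ∧ B ∩ C = ∅

/-- A subset (viewed as an act) is indecomposable. -/
def IndecomposableSet (S : Type u) [Monoid S] {A : Type u} [RightAct S A] (D : Set A) : Prop :=
  ¬ DecomposableSet S D

/-- The act `A` is decomposable. -/
def Decomposable (S : Type u) [Monoid S] (A : Type u) [RightAct S A] : Prop :=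
  DecomposableSet S (Set.univ : Set A)

/-- The act `A` is indecomposable. -/
def Indecomposable (S : Type u) [Monoid S] (A : Type u) [RightAct S A] : Prop :=
  ¬ Decomposable S A

/-- A cyclic act: generated by a single element. -/
def CyclicAct (S : Type u) [Monoid S] (A : Type u) [RightAct S A] : Prop :=
  ∃ a : A, ∀ x : A, ∃ s : S, x = a ⊛ s

/-- `A` is a retract of `B`. -/
def IsRetractOf (S : Type u) [Monoid S] (A B : Type u) [RightAct S A] [RightAct S B] : Prop :=
  ∃ (i : A → B) (p : B → A), IsActHom S i ∧ IsActHom S p ∧ ∀ a : A, p (i a) = a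

/-- `Q` is an injective act: every homomorphism from a subact `C` of any act `B` into `Q`
extends to `B`. -/
def ActInjective (S : Type u) [Monoid S] (Q : Type u) [RightAct S Q] : Prop :=
  ∀ (B : Type u) [RightAct S B], ∀ C : Set B, IsSubact S C →
    ∀ f : B → Q, IsActHomOn S f C →
      ∃ g : B → Q, IsActHom S g ∧ Set.EqOn g f C

/-- `Q` is InC-injective: injective relative to all embeddings into indecomposable acts. -/
def InCInjective (S : Type u) [Monoid S] (Q : Type u) [RightAct S Q] : Prop :=
  ∀ (B : Type u) [RightAct S B], Indecomposable S B → ∀ C : Set B, IsSubact S C →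
    ∀ f : B → Q, IsActHomOn S f C →
      ∃ g : B → Q, IsActHom S g ∧ Set.EqOn g f C

/-- `Q` is InD-injective: injective relative to all embeddings of indecomposable acts. -/
def InDInjective (S : Type u) [Monoid S] (Q : Type u) [RightAct S Q] : Prop :=
  ∀ (B : Type u) [RightAct S B], ∀ C : Set B, IsSubact S C → IndecomposableSet S C →
    ∀ f : B → Q, IsActHomOn S f C →
      ∃ g : B → Q, IsActHom S g ∧ Set.EqOn g f C

/-- `Q` is PInD-injective: every monomorphism from an indecomposable subact extends. -/
def PInDInjective (S : Type u) [Monoid S] (Q : Type u) [RightAct S Q] : Prop :=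
  ∀ (B : Type u) [RightAct S B], ∀ C : Set B, IsSubact S C → IndecomposableSet S C →
    ∀ f : B → Q, IsActHomOn S f C → Set.InjOn f C →
      ∃ g : B → Q, IsActHom S g ∧ Set.EqOn g f C

/-- `A` is quasi injective: homomorphisms from subacts of `A` to `A` extend to `A`. -/
def QuasiInjective (S : Type u) [Monoid S] (A : Type u) [RightAct S A] : Prop :=
  ∀ C : Set A, IsSubact S C → ∀ f : A → A, IsActHomOn S f C →
    ∃ g : A → A, IsActHom S g ∧ Set.EqOn g f C

/-- `A` is pseudo injective: monomorphisms from subacts of any act into `A` extend. -/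
def PseudoInjective (S : Type u) [Monoid S] (A : Type u) [RightAct S A] : Prop :=
  ∀ (C : Type u) [RightAct S C], ∀ B : Set C, IsSubact S B →
    ∀ f : C → A, IsActHomOn S f B → Set.InjOn f B →
      ∃ g : C → A, IsActHom S g ∧ Set.EqOn g f B

/-- A subact `Q` of `A` (viewed as an act in its own right) is injective. -/
def ActInjectiveSet (S : Type u) [Monoid S] {A : Type u} [RightAct S A] (Q : Set A) : Prop :=
  ∀ (B : Type u) [RightAct S B], ∀ C : Set B, IsSubact S C →
    ∀ f : B → A, IsActHomOn S f C → (∀ c ∈ C, f c ∈ Q) →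
      ∃ g : B → A, IsActHom S g ∧ (∀ b : B, g b ∈ Q) ∧ Set.EqOn g f C

/-- A subact `Q` of `A` (viewed as an act in its own right) is InD-injective. -/
def InDInjectiveSet (S : Type u) [Monoid S] {A : Type u} [RightAct S A] (Q : Set A) : Prop :=
  ∀ (B : Type u) [RightAct S B], ∀ C : Set B, IsSubact S C → IndecomposableSet S C →
    ∀ f : B → A, IsActHomOn S f C → (∀ c ∈ C, f c ∈ Q) →
      ∃ g : B → A, IsActHom S g ∧ (∀ b : B, g b ∈ Q) ∧ Set.EqOn g f C

/-- A subact `Q` of `A` (viewed as an act in its own right) is PInD-injective. -/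
def PInDInjectiveSet (S : Type u) [Monoid S] {A : Type u} [RightAct S A] (Q : Set A) : Prop :=
  ∀ (B : Type u) [RightAct S B], ∀ C : Set B, IsSubact S C → IndecomposableSet S C →
    ∀ f : B → A, IsActHomOn S f C → Set.InjOn f C → (∀ c ∈ C, f c ∈ Q) →
      ∃ g : B → A, IsActHom S g ∧ (∀ b : B, g b ∈ Q) ∧ Set.EqOn g f C

/-- The monoid `S` as a right act over itself, by multiplication. -/
instance selfAct (S : Type u) [Monoid S] : RightAct S S where
  act a s := a * s
  act_one := mul_one
  act_mul a s t := mul_assoc a s t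
  nonempty := ⟨1⟩

/-- `Q` is weakly injective: homomorphisms from right ideals of `S` into `Q` extend to `S`. -/
def WeaklyInjective (S : Type u) [Monoid S] (Q : Type u) [RightAct S Q] : Prop :=
  ∀ I : Set S, IsSubact S I → ∀ f : S → Q, IsActHomOn S f I →
    ∃ g : S → Q, IsActHom S g ∧ Set.EqOn g f I

/-- The relation whose equivalence closure has the indecomposable components as classes. -/
def ActRel (S : Type u) [Monoid S] {A : Type u} [RightAct S A] (a b : A) : Prop :=
  ∃ s : S, b = a ⊛ s

/-- The indecomposable component of the element `a` of an act. -/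
def ActComponent (S : Type u) [Monoid S] {A : Type u} [RightAct S A] (a : A) : Set A :=
  {b | Relation.EqvGen (ActRel S) a b}

/-- The coproduct (disjoint union) of a family of acts. -/
instance sigmaAct (S : Type u) [Monoid S] {I : Type u} [Nonempty I] (A : I → Type u)
    [∀ i, RightAct S (A i)] : RightAct S (Σ i, A i) where
  act x s := ⟨x.1, x.2 ⊛ s⟩
  act_one x := by cases x; simp [RightAct.act_one]
  act_mul x s t := by cases x; simp [RightAct.act_mul]
  nonempty := ⟨⟨Classical.arbitrary I, Classical.choice (RightAct.nonempty (S := S))⟩⟩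


/-- The coproduct (disjoint union) of two acts. -/
instance sumAct (S : Type u) [Monoid S] (A B : Type u) [RightAct S A] [RightAct S B] :
    RightAct S (A ⊕ B) where
  act x s := Sum.elim (fun a => Sum.inl (a ⊛ s)) (fun b => Sum.inr (b ⊛ s)) x
  act_one x := by cases x <;> simp [RightAct.act_one]
  act_mul x s t := by cases x <;> simp [RightAct.act_mul]
  nonempty := ⟨Sum.inl (Classical.choice (RightAct.nonempty (S := S) (A := A)))⟩

open Relation

section Components

variable {S : Type u} [Monoid S] {A : Type u} [RightAct S A]

theorem eqvGen_act (x : A) (s : S) : EqvGen (ActRel S) x (x ⊛ s) :=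
  .rel _ _ ⟨s, rfl⟩

theorem mem_actComponent_self (a : A) : a ∈ ActComponent S a :=
  .refl a

theorem act_mem_actComponent_iff {a x : A} {s : S} :
    x ⊛ s ∈ ActComponent S a ↔ x ∈ ActComponent S a :=
  ⟨fun h => .trans _ _ _ h (.symm _ _ (eqvGen_act x s)), fun h => .trans _ _ _ h (eqvGen_act x s)⟩

instance componentAct (a : A) : RightAct S (ActComponent S a) where
  act x s := ⟨x.1 ⊛ s, act_mem_actComponent_iff.2 x.2⟩
  act_one x := Subtype.ext (RightAct.act_one x.1)
  act_mul x s t := Subtype.ext (RightAct.act_mul x.1 s t)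
  nonempty := ⟨⟨a, mem_actComponent_self a⟩⟩

theorem mem_iff_of_eqvGen {B : Set A} (hB : ∀ (x : A) (s : S), x ⊛ s ∈ B ↔ x ∈ B) {x y : A}
    (h : EqvGen (ActRel S) x y) : x ∈ B ↔ y ∈ B := by
  induction h with
  | rel x _ hxy => obtain ⟨s, rfl⟩ := hxy; exact (hB x s).symm
  | refl => rfl
  | symm _ _ _ ih => exact ih.symm
  | trans _ _ _ _ _ ih₁ ih₂ => exact ih₁.trans ih₂

theorem indecomposable_iff_eqvGen :
    Indecomposable S A ↔ ∀ x y : A, EqvGen (ActRel S) x y := by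
  constructor
  · intro h x y
    by_contra hxy
    exact h ⟨ActComponent S x, (ActComponent S x)ᶜ,
      ⟨⟨x, mem_actComponent_self x⟩, fun _ hz _ => act_mem_actComponent_iff.2 hz⟩,
      ⟨⟨y, hxy⟩, fun _ hz _ => mt act_mem_actComponent_iff.1 hz⟩,
      Set.union_compl_self _, Set.inter_compl_self _⟩
  · rintro h ⟨B₁, B₂, ⟨⟨x, hx⟩, hB₁⟩, ⟨⟨y, hy⟩, hB₂⟩, hcover, hdisj⟩
    have hsat : ∀ (z : A) (s : S), z ⊛ s ∈ B₁ ↔ z ∈ B₁ := by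
      refine fun z s => ⟨fun hzs => by_contra fun hz => ?_, fun hz => hB₁ z hz s⟩
      have hz₂ : z ∈ B₂ := (hcover.symm ▸ Set.mem_univ z : z ∈ B₁ ∪ B₂).resolve_left hz
      exact hdisj.subset ⟨hzs, hB₂ z hz₂ s⟩
    exact hdisj.subset ⟨(mem_iff_of_eqvGen hsat (h x y)).1 hx, hy⟩

theorem indecomposable_actComponent (a : A) : Indecomposable S (ActComponent S a) := by
  have lift : ∀ x y : A, EqvGen (ActRel S) x y → ∀ (hx : x ∈ ActComponent S a)
      (hy : y ∈ ActComponent S a), EqvGen (ActRel S) (⟨x, hx⟩ : ActComponent S a) ⟨y, hy⟩ := by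
    intro x y h
    induction h with
    | rel x _ hxy =>
      obtain ⟨s, rfl⟩ := hxy
      exact fun hx _ => eqvGen_act (⟨x, hx⟩ : ActComponent S a) s
    | refl => exact fun _ _ => .refl _
    | symm _ _ _ ih => exact fun hx hy => .symm _ _ (ih hy hx)
    | trans _ _ _ hxy _ ih₁ ih₂ =>
      exact fun hx hz => .trans _ _ _ (ih₁ hx (.trans _ _ _ hx hxy)) (ih₂ _ hz)
  exact indecomposable_iff_eqvGen.2 fun x y => lift x y (.trans _ _ _ (.symm _ _ x.2) y.2) x.2 y.2

theorem decomposable_sum (A B : Type u) [RightAct S A] [RightAct S B] : Decomposable S (A ⊕ B) := by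
  obtain ⟨a⟩ := RightAct.nonempty (S := S) (A := A)
  obtain ⟨b⟩ := RightAct.nonempty (S := S) (A := B)
  refine ⟨Set.range Sum.inl, Set.range Sum.inr, ⟨⟨_, a, rfl⟩, ?_⟩, ⟨⟨_, b, rfl⟩, ?_⟩,
    Set.range_inl_union_range_inr, Set.range_inl_inter_range_inr⟩
  · rintro _ ⟨x, rfl⟩ s
    exact ⟨x ⊛ s, rfl⟩
  · rintro _ ⟨x, rfl⟩ s
    exact ⟨x ⊛ s, rfl⟩

theorem indecomposableSet_of_exists_act_eq {D : Set A}
    (h : ∀ x ∈ D, ∀ y ∈ D, ∃ s t : S, x ⊛ s = y ⊛ t) : IndecomposableSet S D := by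
  rintro ⟨B₁, B₂, ⟨⟨x, hx⟩, hB₁⟩, ⟨⟨y, hy⟩, hB₂⟩, hcover, hdisj⟩
  obtain ⟨s, t, hst⟩ := h x (hcover ▸ Or.inl hx) y (hcover ▸ Or.inr hy)
  exact hdisj.subset ⟨hB₁ x hx s, hst ▸ hB₂ y hy t⟩

theorem LeftReversible.exists_act_eq_of_eqvGen (hS : LeftReversible S) {x y : A}
    (h : EqvGen (ActRel S) x y) : ∃ s t : S, x ⊛ s = y ⊛ t := by
  induction h with
  | rel x _ hxy => obtain ⟨s, rfl⟩ := hxy; exact ⟨s, 1, (RightAct.act_one _).symm⟩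
  | refl => exact ⟨1, 1, rfl⟩
  | symm _ _ _ ih => obtain ⟨s, t, h⟩ := ih; exact ⟨t, s, h.symm⟩
  | trans x y z _ _ ih₁ ih₂ =>
    obtain ⟨s, t, h₁⟩ := ih₁
    obtain ⟨s', t', h₂⟩ := ih₂
    obtain ⟨p, q, hpq⟩ := hS t s'
    refine ⟨s * p, t' * q, ?_⟩
    calc x ⊛ (s * p) = y ⊛ (t * p) := by rw [← RightAct.act_mul, h₁, RightAct.act_mul]
      _ = y ⊛ (s' * q) := by rw [hpq]
      _ = z ⊛ (t' * q) := by rw [← RightAct.act_mul, h₂, RightAct.act_mul]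

theorem LeftReversible.indecomposableSet (hS : LeftReversible S) (hA : Indecomposable S A)
    (D : Set A) : IndecomposableSet S D :=
  indecomposableSet_of_exists_act_eq fun x _ y _ =>
    hS.exists_act_eq_of_eqvGen (indecomposable_iff_eqvGen.1 hA x y)

end Components

section Injective

variable {S : Type u} [Monoid S]

theorem ActInjective.weaklyInjective {Q : Type u} [RightAct S Q] (hQ : ActInjective S Q) :
    WeaklyInjective S Q :=
  fun I hI f hf => hQ S I hI f hf

instance punitAct : RightAct S PUnit.{u + 1} where
  act _ _ := .unit
  act_one _ := rfl
  act_mul _ _ _ := rfl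
  nonempty := ⟨.unit⟩

theorem actInjective_punit : ActInjective S PUnit.{u + 1} :=
  fun _ _ _ _ _ _ => ⟨fun _ => .unit, fun _ _ => rfl, fun _ _ => rfl⟩

instance cofreeAct (X : Type u) [Nonempty X] : RightAct S (S → X) where
  act f s t := f (s * t)
  act_one f := funext fun t => congrArg f (one_mul t)
  act_mul f s t := funext fun r => congrArg f (mul_assoc s t r).symm
  nonempty := ⟨fun _ => Classical.arbitrary X⟩

theorem actInjective_cofree (X : Type u) [Nonempty X] : ActInjective S (S → X) := by
  intro B _ C _ f hf
  refine ⟨fun b t => f (b ⊛ t) 1, fun b s => funext fun t => ?_, fun c hc => funext fun t => ?_⟩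
  · show f ((b ⊛ s) ⊛ t) 1 = f (b ⊛ (s * t)) 1
    rw [RightAct.act_mul]
  · show f (c ⊛ t) 1 = f c t
    rw [hf c hc t]
    exact congrArg (f c) (mul_one t)

theorem ActInjective.of_retract {A B : Type u} [RightAct S A] [RightAct S B]
    (hB : ActInjective S B) (i : A → B) (p : B → A) (hi : IsActHom S i) (hp : IsActHom S p)
    (hpi : ∀ a, p (i a) = a) : ActInjective S A := by
  intro B' _ C hC f hf
  obtain ⟨g, hg, hgf⟩ := hB B' C hC (i ∘ f) fun c hc s => (congrArg i (hf c hc s)).trans (hi _ _)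
  exact ⟨p ∘ g, fun b s => (congrArg p (hg b s)).trans (hp _ _),
    fun c hc => (congrArg p (hgf hc)).trans (hpi _)⟩

theorem ActInjective.exists_isZeroElem {Q : Type u} [RightAct S Q] (hQ : ActInjective S Q) :
    ∃ θ : Q, IsZeroElem S θ := by
  obtain ⟨q⟩ := RightAct.nonempty (S := S) (A := Q)
  obtain ⟨g, hg, -⟩ := hQ (Q ⊕ PUnit.{u + 1}) (Set.range Sum.inl)
    ⟨⟨_, q, rfl⟩, by rintro _ ⟨x, rfl⟩ s; exact ⟨x ⊛ s, rfl⟩⟩ (Sum.elim id fun _ => q)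
    (by rintro _ ⟨x, rfl⟩ s; rfl)
  exact ⟨g (Sum.inr .unit), fun s => (hg (Sum.inr .unit) s).symm⟩

open Classical in
theorem ActInjective.actComponent_of_isZeroElem {Q : Type u} [RightAct S Q]
    (hQ : ActInjective S Q) {θ : Q} (hθ : IsZeroElem S θ) : ActInjective S (ActComponent S θ) := by
  refine hQ.of_retract Subtype.val
    (fun x => if hx : x ∈ ActComponent S θ then ⟨x, hx⟩ else ⟨θ, mem_actComponent_self θ⟩)
    (fun _ _ => rfl) (fun x s => ?_) (fun x => dif_pos x.2)
  dsimp only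
  by_cases hx : x ∈ ActComponent S θ
  · rw [dif_pos hx, dif_pos (act_mem_actComponent_iff.2 hx)]
    rfl
  · rw [dif_neg hx, dif_neg (mt act_mem_actComponent_iff.1 hx)]
    exact Subtype.ext (hθ s).symm

theorem actInjective_sum_of_forall_sigma
    (h : ∀ (I : Type u) [Nonempty I] (A : I → Type u) [∀ i, RightAct S (A i)],
      (∀ i, ActInjective S (A i)) → ActInjective S (Σ i, A i))
    {A B : Type u} [RightAct S A] [RightAct S B] (hA : ActInjective S A)
    (hB : ActInjective S B) : ActInjective S (A ⊕ B) := by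
  let F : ULift.{u} Bool → Type u := fun b => cond b.down A B
  let instF : ∀ b, RightAct S (F b)
    | ⟨true⟩ => ‹RightAct S A›
    | ⟨false⟩ => ‹RightAct S B›
  refine (h (ULift Bool) F fun | ⟨true⟩ => hA | ⟨false⟩ => hB).of_retract
    (Sum.elim (fun a => ⟨⟨true⟩, a⟩) fun b => ⟨⟨false⟩, b⟩)
    (fun | ⟨⟨true⟩, a⟩ => .inl a | ⟨⟨false⟩, b⟩ => .inr b) ?_ ?_ ?_
  · rintro (a | b) s <;> rfl
  · rintro ⟨⟨_ | _⟩, x⟩ s <;> rfl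
  · rintro (a | b) <;> rfl

end Injective

section Coproduct

variable {S : Type u} [Monoid S] {I : Type u} {A : I → Type u}

open Classical in
noncomputable def sigmaProj (i : I) (θ : A i) : (Σ j, A j) → A i
  | ⟨j, y⟩ => if h : j = i then h ▸ y else θ

theorem sigma_mk_sigmaProj (x : Σ j, A j) (θ : A x.1) :
    (⟨x.1, sigmaProj x.1 θ x⟩ : Σ j, A j) = x := by
  obtain ⟨j, y⟩ := x
  simp [sigmaProj]

variable [Nonempty I] [∀ i, RightAct S (A i)]

theorem isActHom_sigmaProj {i : I} {θ : A i} (hθ : IsZeroElem S θ) :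
    IsActHom S (sigmaProj (A := A) i θ) := by
  rintro ⟨j, y⟩ s
  show sigmaProj i θ ⟨j, y ⊛ s⟩ = sigmaProj i θ ⟨j, y⟩ ⊛ s
  by_cases h : j = i
  · subst h
    simp [sigmaProj]
  · simp [sigmaProj, h, hθ s]

theorem isActHom_sigma_mk {B : Type u} [RightAct S B] (ι : B → I)
    (hι : ∀ (b : B) (s : S), ι (b ⊛ s) = ι b) (h : ∀ i, B → A i) (hh : ∀ i, IsActHom S (h i)) :
    IsActHom S (fun b => (⟨ι b, h (ι b) b⟩ : Σ i, A i)) := by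
  intro b s
  show (⟨ι (b ⊛ s), h (ι (b ⊛ s)) (b ⊛ s)⟩ : Σ i, A i) = ⟨ι b, h (ι b) b ⊛ s⟩
  rw [hι, hh]

open Classical in
theorem LeftReversible.exists_sigma_index (hS : LeftReversible S) {B : Type u} [RightAct S B]
    {C : Set B} {f : B → Σ i, A i} (hf : IsActHomOn S f C) :
    ∃ ι : B → I, (∀ (b : B) (s : S), ι (b ⊛ s) = ι b) ∧ ∀ c ∈ C, ι c = (f c).1 := by
  have hfst : ∀ c ∈ C, ∀ c' ∈ C, EqvGen (ActRel S) c c' → (f c).1 = (f c').1 := by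
    intro c hc c' hc' h
    obtain ⟨s, t, hst⟩ := hS.exists_act_eq_of_eqvGen h
    calc (f c).1 = (f (c ⊛ s)).1 := by rw [hf c hc]; rfl
      _ = (f (c' ⊛ t)).1 := by rw [hst]
      _ = (f c').1 := by rw [hf c' hc']; rfl
  let κ : Quot (ActRel S) → I := fun q =>
    if h : ∃ c ∈ C, Quot.mk _ c = q then (f h.choose).1 else Classical.arbitrary I
  refine ⟨fun b => κ (Quot.mk _ b), fun b s => congrArg κ (Quot.sound ⟨s, rfl⟩).symm,
    fun c hc => ?_⟩
  have h : ∃ c' ∈ C, Quot.mk _ c' = Quot.mk (ActRel S) c := ⟨c, hc, rfl⟩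
  simp only [κ, dif_pos h]
  exact hfst _ h.choose_spec.1 c hc (Quot.eqvGen_exact h.choose_spec.2)

theorem LeftReversible.actInjective_sigma (hS : LeftReversible S)
    (hA : ∀ i, ActInjective S (A i)) : ActInjective S (Σ i, A i) := by
  intro B _ C hC f hf
  choose θ hθ using fun i => (hA i).exists_isZeroElem
  choose h hh hhf using fun i => hA i B C hC (sigmaProj i (θ i) ∘ f) fun c hc s =>
    (congrArg _ (hf c hc s)).trans (isActHom_sigmaProj (hθ i) _ _)
  obtain ⟨ι, hι, hιf⟩ := hS.exists_sigma_index hf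
  refine ⟨fun b => ⟨ι b, h (ι b) b⟩, isActHom_sigma_mk ι hι h hh, fun c hc => ?_⟩
  dsimp only
  rw [hιf c hc, hhf _ hc]
  exact sigma_mk_sigmaProj (f c) _

end Coproduct

section Converse

variable {S : Type u} [Monoid S]

theorem selfAct_act (x s : S) : (selfAct S).act x s = x * s :=
  rfl

open Classical in
theorem WeaklyInjective.exists_act_eq_act {Q : Type u} [RightAct S Q]
    (hQ : WeaklyInjective S Q) {a b : S} (hab : ∀ u v : S, a * u ≠ b * v) (q₁ q₂ : Q) :
    ∃ q : Q, q ⊛ a = q₁ ⊛ a ∧ q ⊛ b = q₂ ⊛ b := by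
  have hb : ∀ v, b * v ∉ Set.range (a * ·) := fun v ⟨u, hu⟩ => hab u v hu
  let f : S → Q := fun x => if x ∈ Set.range (a * ·) then q₁ ⊛ x else q₂ ⊛ x
  have hI : IsSubact S (Set.range (a * ·) ∪ Set.range (b * ·)) := by
    refine ⟨⟨a, .inl ⟨1, mul_one a⟩⟩, ?_⟩
    rintro _ (⟨u, rfl⟩ | ⟨v, rfl⟩) s
    · exact .inl ⟨u * s, (mul_assoc a u s).symm⟩
    · exact .inr ⟨v * s, (mul_assoc b v s).symm⟩
  have hf : IsActHomOn S f (Set.range (a * ·) ∪ Set.range (b * ·)) := by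
    rintro _ (⟨u, rfl⟩ | ⟨v, rfl⟩) s
    · have hau : a * u ∈ Set.range (a * ·) := ⟨u, rfl⟩
      have haus : a * u * s ∈ Set.range (a * ·) := ⟨u * s, (mul_assoc a u s).symm⟩
      simp only [f, selfAct_act, if_pos hau, if_pos haus, RightAct.act_mul]
    · have hbvs : b * v * s ∉ Set.range (a * ·) := mul_assoc b v s ▸ hb (v * s)
      simp only [f, selfAct_act, if_neg hbvs, if_neg (hb v), RightAct.act_mul]
  obtain ⟨g, hg, hgf⟩ := hQ _ hI f hf
  have hg₁ : ∀ x, g x = g 1 ⊛ x := fun x => by rw [← hg]; exact congrArg g (one_mul x).symm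
  refine ⟨g 1, ?_, ?_⟩
  · rw [← hg₁, hgf (.inl ⟨1, mul_one a⟩)]
    exact if_pos ⟨1, mul_one a⟩
  · rw [← hg₁, hgf (.inr ⟨1, mul_one b⟩)]
    exact if_neg (mul_one b ▸ hb 1)

theorem leftReversible_of_decomposable_of_weaklyInjective {Q : Type u} [RightAct S Q]
    (hdec : Decomposable S Q) (hQ : WeaklyInjective S Q) : LeftReversible S := by
  obtain ⟨q₁, q₂, h₁₂⟩ : ∃ q₁ q₂ : Q, ¬ EqvGen (ActRel S) q₁ q₂ := by
    by_contra! h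
    exact indecomposable_iff_eqvGen.2 h hdec
  intro a b
  by_contra! hab
  obtain ⟨q, ha, hb⟩ := hQ.exists_act_eq_act hab q₁ q₂
  apply h₁₂
  refine .trans _ (q ⊛ a) _ (ha ▸ eqvGen_act q₁ a) (.trans _ q _ (.symm _ _ (eqvGen_act q a)) ?_)
  exact .trans _ (q₂ ⊛ b) _ (hb ▸ eqvGen_act q b) (.symm _ _ (eqvGen_act q₂ b))

theorem decomposableSet_pair {A : Type u} [RightAct S A] {θ₁ θ₂ : A} (h₁ : IsZeroElem S θ₁)
    (h₂ : IsZeroElem S θ₂) (hne : θ₁ ≠ θ₂) : DecomposableSet S {θ₁, θ₂} :=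
  ⟨{θ₁}, {θ₂}, ⟨⟨θ₁, rfl⟩, fun _ h s => h ▸ h₁ s⟩, ⟨⟨θ₂, rfl⟩, fun _ h s => h ▸ h₂ s⟩,
    Set.singleton_union, Set.singleton_inter_eq_empty.2 hne⟩

theorem isSubact_pair {A : Type u} [RightAct S A] {θ₁ θ₂ : A} (h₁ : IsZeroElem S θ₁)
    (h₂ : IsZeroElem S θ₂) : IsSubact S {θ₁, θ₂} :=
  ⟨⟨θ₁, .inl rfl⟩, by rintro _ (rfl | rfl) s <;> simp [h₁ s, h₂ s]⟩

theorem exists_indecomposable_actInjective_of_not_leftReversible (hS : ¬ LeftReversible S) :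
    ∃ (Q : Type u) (_ : RightAct S Q), Indecomposable S Q ∧ ActInjective S Q ∧
      ∃ θ₁ θ₂ : Q, θ₁ ≠ θ₂ ∧ IsZeroElem S θ₁ ∧ IsZeroElem S θ₂ := by
  simp only [LeftReversible, not_forall, not_exists] at hS
  obtain ⟨a, b, hab⟩ := hS
  let top : S → ULift.{u} Prop := fun _ => ⟨True⟩
  let bot : S → ULift.{u} Prop := fun _ => ⟨False⟩
  let χ : S → ULift.{u} Prop := fun t => ⟨∃ u, t = a * u⟩
  have hχa : χ ⊛ a = top := funext fun t => congrArg ULift.up (eq_true ⟨t, rfl⟩)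
  have hχb : χ ⊛ b = bot :=
    funext fun t => congrArg ULift.up (eq_false fun ⟨u, hu⟩ => hab u t hu.symm)
  have hbot : bot ∈ ActComponent S top :=
    .trans _ χ _ (hχa ▸ .symm _ _ (eqvGen_act χ a)) (hχb ▸ eqvGen_act χ b)
  refine ⟨ActComponent S top, inferInstance, indecomposable_actComponent top,
    (actInjective_cofree (ULift Prop)).actComponent_of_isZeroElem fun _ => rfl,
    ⟨top, mem_actComponent_self top⟩, ⟨bot, hbot⟩, fun h => ?_, fun _ => rfl, fun _ => rfl⟩
  exact (congrArg ULift.down (congrFun (congrArg Subtype.val h) 1)).mp trivial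

end Converse

/-- TFAE: (i) coproducts of injective acts are injective; (ii) some
coproduct of two injective acts is weakly injective; (iii) there is a decomposable
weakly injective act; (iv) `S` is left reversible; (v) subacts of indecomposable acts
are indecomposable; (vi) subacts of indecomposable injective acts are indecomposable;
(vii) every indecomposable injective act contains exactly one zero. -/
theorem coproducts_of_injectives_tfae (S : Type u) [Monoid S] :
    List.TFAE [
      ∀ (I : Type u) [Nonempty I] (A : I → Type u) [∀ i, RightAct S (A i)],
        (∀ i, ActInjective S (A i)) → ActInjective S (Σ i, A i),
      ∃ (A B : Type u) (_ : RightAct S A) (_ : RightAct S B),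
        ActInjective S A ∧ ActInjective S B ∧ WeaklyInjective S (A ⊕ B),
      ∃ (Q : Type u) (_ : RightAct S Q), Decomposable S Q ∧ WeaklyInjective S Q,
      LeftReversible S,
      ∀ (A : Type u) [RightAct S A], Indecomposable S A →
        ∀ C : Set A, IsSubact S C → IndecomposableSet S C,
      ∀ (A : Type u) [RightAct S A], Indecomposable S A → ActInjective S A →
        ∀ C : Set A, IsSubact S C → IndecomposableSet S C,
      ∀ (Q : Type u) [RightAct S Q], Indecomposable S Q → ActInjective S Q →
        ∃! θ : Q, IsZeroElem S θ ] := by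
  tfae_have 4 → 1 := fun hS _ _ _ _ hA => hS.actInjective_sigma hA
  tfae_have 1 → 2 := fun h1 => ⟨PUnit, PUnit, inferInstance, inferInstance, actInjective_punit,
    actInjective_punit,
    (actInjective_sum_of_forall_sigma h1 actInjective_punit actInjective_punit).weaklyInjective⟩
  tfae_have 2 → 3 := fun ⟨A, B, _, _, _, _, hw⟩ => ⟨A ⊕ B, inferInstance, decomposable_sum A B, hw⟩
  tfae_have 3 → 4 := fun ⟨_, _, hdec, hw⟩ =>
    leftReversible_of_decomposable_of_weaklyInjective hdec hw
  tfae_have 4 → 5 := fun hS _ _ hA C _ => hS.indecomposableSet hA C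
  tfae_have 5 → 6 := fun h5 A _ hA _ => h5 A hA
  tfae_have 6 → 7 := by
    intro h6 Q _ hQ hinj
    obtain ⟨θ, hθ⟩ := hinj.exists_isZeroElem
    refine ⟨θ, hθ, fun θ' hθ' => by_contra fun hne => ?_⟩
    exact h6 Q hQ hinj _ (isSubact_pair hθ' hθ) (decomposableSet_pair hθ' hθ hne)
  tfae_have 7 → 4 := by
    intro h7
    by_contra hS
    obtain ⟨Q, _, hQ, hinj, θ₁, θ₂, hne, h₁, h₂⟩ :=
      exists_indecomposable_actInjective_of_not_leftReversible hS
    exact hne ((h7 Q hQ hinj).unique h₁ h₂)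
  tfae_finish
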